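/- Let p ∈ [0,1], let (Z_i)_{i∈ℕ} be an i.i.d. sequence of Bernoulli(p) random variables on a probability space Ω, and let μ̂_n = (1/n)∑_{i=1}^n Z_i. Let d ∈ ℝ with p ≠ d, and let Δ > 0 and δ₀ > 0. Then there exists n₀ ∈ ℕ such that for all n ≥ n₀, with probability at least 1 − δ₀, the following holds: if p > d then μ̂_n − d ≥ ε(Δ, n), and if p < d then μ̂_n − d ≤ −ε(Δ, n). -/

import Mathlib

/-! By Chebyshev's inequality, the empirical mean of independent Bernoulli(p) variables, whose
variance is at most `1 / (4n)`, lies within `|p - d| / 2` of `p` with probability tending to one.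
The radius `ε(Δ, n)` is of order `sqrt (log log n / n)`, so it eventually drops below
`|p - d| / 2`, and on that event `μ̂_n - d` has the sign of `p - d` and modulus above `ε(Δ, n)`. -/

open MeasureTheory ProbabilityTheory

/-- The adaptive confidence radius
`ε(δ,n) = sqrt(((3/5)·log(log_{11/10}(n) + 1) + (5/9)·log(24/δ))/n)`. -/
noncomputable def eps (δ : ℝ) (n : ℕ) : ℝ :=
  Real.sqrt (((3 / 5) * Real.log (Real.log n / Real.log (11 / 10) + 1)
      + (5 / 9) * Real.log (24 / δ)) / n)

/-- The empirical mean `μ̂_n = (1/n) ∑_{i=1}^n Z_i`. -/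
noncomputable def muhat {Ω : Type*} (Z : ℕ → Ω → ℝ) (n : ℕ) (ω : Ω) : ℝ :=
  (1 / n : ℝ) * ∑ i ∈ Finset.Icc 1 n, Z i ω

open Filter Topology

lemma tendsto_log_logb_add_one_div_atTop {b : ℝ} (hb : 1 < b) :
    Tendsto (fun n : ℕ => Real.log (Real.log n / Real.log b + 1) / n) atTop (𝓝 0) := by
  have hlogb : 0 < Real.log b := Real.log_pos hb
  have hupper : Tendsto (fun n : ℕ => Real.log n / n / Real.log b) atTop (𝓝 0) := by
    simpa using ((Real.isLittleO_log_id_atTop.tendsto_div_nhds_zero).comp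
      tendsto_natCast_atTop_atTop).div_const (Real.log b)
  have hlogb_n : ∀ n : ℕ, 0 ≤ Real.log n / Real.log b := fun n =>
    div_nonneg (Real.log_natCast_nonneg n) hlogb.le
  refine tendsto_of_tendsto_of_tendsto_of_le_of_le tendsto_const_nhds hupper
    (fun n => ?_) (fun n => ?_)
  · exact div_nonneg (Real.log_nonneg (by linarith [hlogb_n n])) n.cast_nonneg
  · rw [div_right_comm]
    gcongr
    linarith [Real.log_le_sub_one_of_pos (x := Real.log n / Real.log b + 1)
      (by linarith [hlogb_n n])]

lemma tendsto_eps_atTop (δ : ℝ) : Tendsto (eps δ) atTop (𝓝 0) := by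
  have hrad : Tendsto (fun n : ℕ => ((3 / 5) * Real.log (Real.log n / Real.log (11 / 10) + 1)
      + (5 / 9) * Real.log (24 / δ)) / n) atTop (𝓝 0) := by
    simpa [add_div, mul_div_assoc] using
      ((tendsto_log_logb_add_one_div_atTop (by norm_num)).const_mul (3 / 5)).add
        (tendsto_const_div_atTop_nhds_zero_nat ((5 / 9) * Real.log (24 / δ)))
  rw [← Real.sqrt_zero]
  exact (Real.continuous_sqrt.tendsto 0).comp hrad

section ZeroOne

variable {Ω : Type*} [MeasurableSpace Ω] {μ : Measure Ω} {X : Ω → ℝ}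

lemma memLp_two_of_zero_or_one [IsFiniteMeasure μ] (hXm : Measurable X)
    (hX : ∀ ω, X ω = 0 ∨ X ω = 1) : MemLp X 2 μ :=
  MemLp.of_bound hXm.aestronglyMeasurable 1 (ae_of_all _ fun ω => by
    rcases hX ω with h | h <;> simp [h])

lemma integral_eq_measureReal_of_zero_or_one (hXm : Measurable X)
    (hX : ∀ ω, X ω = 0 ∨ X ω = 1) : μ[X] = μ.real {ω | X ω = 1} := by
  have hind : X = {ω | X ω = 1}.indicator 1 := by
    funext ω
    rcases hX ω with h | h <;> simp [h]
  nth_rewrite 1 [hind]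
  exact integral_indicator_one (hXm (measurableSet_singleton 1) : MeasurableSet {ω | X ω = 1})

lemma variance_le_of_zero_or_one [IsProbabilityMeasure μ] (hXm : Measurable X)
    (hX : ∀ ω, X ω = 0 ∨ X ω = 1) : variance X μ ≤ 1 / 4 := by
  calc variance X μ ≤ ((1 - 0) / 2) ^ 2 :=
        variance_le_sq_of_bounded
          (ae_of_all _ fun ω => by rcases hX ω with h | h <;> simp [h]) hXm.aemeasurable
    _ = 1 / 4 := by norm_num

end ZeroOne

lemma muhat_eq_const_mul_sum {Ω : Type*} (Z : ℕ → Ω → ℝ) (n : ℕ) :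
    muhat Z n = fun ω => (1 / n : ℝ) * (∑ i ∈ Finset.Icc 1 n, Z i) ω := by
  funext ω
  simp [muhat, Finset.sum_apply]

section WeakLaw

variable {Ω : Type*} [MeasurableSpace Ω] {μ : Measure Ω} {Z : ℕ → Ω → ℝ} {m v : ℝ}

lemma integral_muhat (hZ : ∀ i, Integrable (Z i) μ) (hmean : ∀ i, μ[Z i] = m) {n : ℕ}
    (hn : n ≠ 0) : μ[muhat Z n] = m := by
  simp only [muhat]
  rw [integral_const_mul, integral_finsetSum _ fun i _ => hZ i]
  simp [hmean, hn]

lemma variance_muhat_le (hZ : ∀ i, MemLp (Z i) 2 μ)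
    (hindep : Pairwise fun i j => IndepFun (Z i) (Z j) μ) (hvar : ∀ i, variance (Z i) μ ≤ v)
    (n : ℕ) : variance (muhat Z n) μ ≤ v / n := by
  rw [muhat_eq_const_mul_sum, variance_const_mul,
    IndepFun.variance_sum (fun i _ => hZ i) fun i _ j _ hij => hindep hij]
  calc (1 / n : ℝ) ^ 2 * ∑ i ∈ Finset.Icc 1 n, variance (Z i) μ
      ≤ (1 / n : ℝ) ^ 2 * (n * v) := by
        gcongr
        simpa using Finset.sum_le_card_nsmul (Finset.Icc 1 n) _ _ fun i _ => hvar i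
    _ = v / n := by
        rcases eq_or_ne n 0 with rfl | hn
        · simp
        · field_simp

lemma measure_le_abs_muhat_sub_le [IsFiniteMeasure μ] (hZ : ∀ i, MemLp (Z i) 2 μ)
    (hindep : Pairwise fun i j => IndepFun (Z i) (Z j) μ) (hmean : ∀ i, μ[Z i] = m)
    (hvar : ∀ i, variance (Z i) μ ≤ v) {n : ℕ} (hn : n ≠ 0) {t : ℝ} (ht : 0 < t) :
    μ {ω | t ≤ |muhat Z n ω - m|} ≤ ENNReal.ofReal (v / n / t ^ 2) := by
  have hmemLp : MemLp (muhat Z n) 2 μ :=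
    (memLp_finsetSum _ fun i _ => hZ i).const_mul _
  calc μ {ω | t ≤ |muhat Z n ω - m|}
      ≤ ENNReal.ofReal (variance (muhat Z n) μ / t ^ 2) := by
        simpa [integral_muhat (fun i => (hZ i).integrable one_le_two) hmean hn] using
          meas_ge_le_variance_div_sq hmemLp ht
    _ ≤ ENNReal.ofReal (v / n / t ^ 2) := by
        gcongr
        exact variance_muhat_le hZ hindep hvar n

theorem tendsto_measure_le_abs_muhat_sub [IsFiniteMeasure μ] (hZ : ∀ i, MemLp (Z i) 2 μ)
    (hindep : Pairwise fun i j => IndepFun (Z i) (Z j) μ) (hmean : ∀ i, μ[Z i] = m)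
    (hvar : ∀ i, variance (Z i) μ ≤ v) {t : ℝ} (ht : 0 < t) :
    Tendsto (fun n => μ {ω | t ≤ |muhat Z n ω - m|}) atTop (𝓝 0) := by
  have hbound : Tendsto (fun n : ℕ => ENNReal.ofReal (v / n / t ^ 2)) atTop (𝓝 0) := by
    simpa using ENNReal.tendsto_ofReal
      ((tendsto_const_div_atTop_nhds_zero_nat v).div_const (t ^ 2))
  refine tendsto_of_tendsto_of_tendsto_of_le_of_le' tendsto_const_nhds hbound
    (.of_forall fun _ => bot_le) ?_
  filter_upwards [eventually_ne_atTop 0] with n hn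
  exact measure_le_abs_muhat_sub_le hZ hindep hmean hvar hn ht

end WeakLaw

lemma separates_of_abs_sub_lt {p d x e : ℝ} (hx : |x - p| < |p - d| / 2)
    (he : e < |p - d| / 2) : (p > d → x - d ≥ e) ∧ (p < d → x - d ≤ -e) := by
  rw [abs_lt] at hx
  constructor
  · intro hdp
    rw [abs_of_pos (sub_pos.2 hdp)] at hx he
    linarith
  · intro hpd
    rw [abs_of_neg (sub_neg.2 hpd)] at hx he
    linarith

theorem eventually_separates_general
    {Ω : Type*} [MeasurableSpace Ω] (μ : Measure Ω) [IsProbabilityMeasure μ]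
    (p : ℝ) (hp : p ∈ Set.Icc (0 : ℝ) 1)
    (Z : ℕ → Ω → ℝ)
    (hmeas : ∀ i, Measurable (Z i))
    (hindep : iIndepFun Z μ)
    (hval : ∀ i ω, Z i ω = 0 ∨ Z i ω = 1)
    (hbern : ∀ i, μ {ω | Z i ω = 1} = ENNReal.ofReal p)
    (d : ℝ) (hpd : p ≠ d) (Δ : ℝ) (δ₀ : ℝ) (hδ₀ : 0 < δ₀) :
    ∃ n₀ : ℕ, ∀ n ≥ n₀,
      1 - ENNReal.ofReal δ₀
        ≤ μ {ω | (p > d → muhat Z n ω - d ≥ eps Δ n)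
              ∧ (p < d → muhat Z n ω - d ≤ -eps Δ n)} := by
  have hgap : 0 < |p - d| / 2 := by simpa [sub_eq_zero] using hpd
  have hmean : ∀ i, μ[Z i] = p := fun i => by
    rw [integral_eq_measureReal_of_zero_or_one (hmeas i) (hval i), measureReal_def, hbern,
      ENNReal.toReal_ofReal hp.1]
  have hconc := tendsto_measure_le_abs_muhat_sub
    (fun i => memLp_two_of_zero_or_one (hmeas i) (hval i))
    (fun i j hij => hindep.indepFun hij) hmean
    (fun i => variance_le_of_zero_or_one (μ := μ) (hmeas i) (hval i)) hgap
  obtain ⟨n₀, hn₀⟩ := eventually_atTop.1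
    (((tendsto_order.1 hconc).2 _ (ENNReal.ofReal_pos.2 hδ₀)).and
      ((tendsto_order.1 (tendsto_eps_atTop Δ)).2 _ hgap))
  refine ⟨n₀, fun n hn => ?_⟩
  obtain ⟨hfar, hsmall⟩ := hn₀ n hn
  set far := {ω | |p - d| / 2 ≤ |muhat Z n ω - p|}
  calc 1 - ENNReal.ofReal δ₀
      ≤ 1 - μ far := tsub_le_tsub_left hfar.le 1
    _ ≤ μ farᶜ := tsub_le_iff_left.2 (by simpa using measure_univ_le_add_compl (μ := μ) far)
    _ ≤ _ := measure_mono fun ω hω =>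
        separates_of_abs_sub_lt (not_le.1 hω) hsmall

/-- Inference-termination lemma for the atomic specification `μ_Z ≥ d`, under the
well-definedness assumption `p ≠ d`: eventually, with probability at least `1 − δ₀`,
the empirical mean separates from the threshold `d` by more than the confidence
radius, on the correct side. -/
theorem eventually_separates
    {Ω : Type*} [MeasurableSpace Ω] (μ : Measure Ω) [IsProbabilityMeasure μ]
    (p : ℝ) (hp : p ∈ Set.Icc (0 : ℝ) 1)
    (Z : ℕ → Ω → ℝ)
    (hmeas : ∀ i, Measurable (Z i))
    (hindep : iIndepFun Z μ)
    (hval : ∀ i ω, Z i ω = 0 ∨ Z i ω = 1)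
    (hbern : ∀ i, μ {ω | Z i ω = 1} = ENNReal.ofReal p)
    (d : ℝ) (hpd : p ≠ d) (Δ : ℝ) (hΔ : 0 < Δ) (δ₀ : ℝ) (hδ₀ : 0 < δ₀) :
    ∃ n₀ : ℕ, ∀ n ≥ n₀,
      1 - ENNReal.ofReal δ₀
        ≤ μ {ω | (p > d → muhat Z n ω - d ≥ eps Δ n)
              ∧ (p < d → muhat Z n ω - d ≤ -eps Δ n)} :=
  eventually_separates_general μ p hp Z hmeas hindep hval hbern d hpd Δ δ₀ hδ₀
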